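/- arXiv:2308.01422 — 7 statements merged into one kernel-verified Lean document; each statement's English description precedes it below -/
import Mathlib

section
/- Let a and b be two non-zero Turing degrees that are incomparable with respect to Turing reducibility. Then the problems w_a and w_b are Weihrauch incomparable: neither w_a ≤_W w_b nor w_b ≤_W w_a holds. -/
/-- Baire space. -/
abbrev Baire := ℕ → ℕ

/-- A problem: a partial multivalued function on Baire space, given as the
solution-set map; the domain is the set of instances with nonempty solution set. -/
def Problem := Baire → Set Baire

/-- Domain of a problem. -/
def Dom (f : Problem) : Set Baire := {x | (f x).Nonempty}

/-- A standard computable pairing of two sequences (interleaving). -/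
def pair (x y : Baire) : Baire := fun n => if n % 2 = 0 then x (n / 2) else y (n / 2)

/-- Initial segment of length `m` of a sequence. -/
def initSeg (x : Baire) (m : ℕ) : List ℕ := (List.range m).map x

/-- `F` is (the restriction to `D` of) a partial computable function on Baire space:
there is a computable monotone oracle functional computing `F x` from prefixes of `x`,
correctly and consistently, for every `x ∈ D`. -/
def ComputableOn (F : Baire → Baire) (D : Set Baire) : Prop :=
  ∃ φ : List ℕ → ℕ → Option ℕ, Computable₂ φ ∧
    ∀ x ∈ D, ∀ n : ℕ,
      (∃ m, φ (initSeg x m) n = some (F x n)) ∧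
      (∀ m v, φ (initSeg x m) n = some v → v = F x n)

/-- Weihrauch reducibility `f ≤_W g`, with the partial computable forward functional `k`
defined on `Dom f` and the partial computable backward functional `h` defined on all
pairs `⟨x, y⟩` with `x ∈ Dom f` and `y` a `g`-solution of `k x`. -/
def WRed (f g : Problem) : Prop :=
  ∃ h k : Baire → Baire,
    ComputableOn k (Dom f) ∧
    ComputableOn h {p | ∃ x ∈ Dom f, ∃ y ∈ g (k x), p = pair x y} ∧
    ∀ x ∈ Dom f, k x ∈ Dom g ∧ ∀ y ∈ g (k x), h (pair x y) ∈ f x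

/-- Weihrauch equivalence. -/
def WEquiv (f g : Problem) : Prop := WRed f g ∧ WRed g f

/-- Continuous Weihrauch reducibility `f ≤*_W g`: as `WRed` but the functionals
need only be partial continuous (continuous on their domains, Baire space carrying
the product topology). -/
def ContWRed (f g : Problem) : Prop :=
  ∃ h k : Baire → Baire,
    ContinuousOn k (Dom f) ∧
    ContinuousOn h {p | ∃ x ∈ Dom f, ∃ y ∈ g (k x), p = pair x y} ∧
    ∀ x ∈ Dom f, k x ∈ Dom g ∧ ∀ y ∈ g (k x), h (pair x y) ∈ f x

/-- Continuous Weihrauch equivalence. -/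
def ContWEquiv (f g : Problem) : Prop := ContWRed f g ∧ ContWRed g f

/-- Composition of problems: `dom (f ∘ g) = {x ∈ dom g : g x ⊆ dom f}` and
`(f ∘ g) x = {z : ∃ y ∈ g x, z ∈ f y}`. -/
def pcomp (f g : Problem) : Problem :=
  fun x => {z | g x ⊆ Dom f ∧ ∃ y ∈ g x, z ∈ f y}

/-- The identity problem. -/
def idp : Problem := fun x => {x}

/-- `p` is (a representative of) the compositional product `f * g`: the maximum,
with respect to `≤_W`, of `{f' ∘ g' : f' ≤_W f, g' ≤_W g}`. -/
def IsCompProd (f g p : Problem) : Prop :=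
  (∃ f' g', WRed f' f ∧ WRed g' g ∧ WEquiv p (pcomp f' g')) ∧
  (∀ f' g', WRed f' f → WRed g' g → WRed (pcomp f' g') p)

/-- `IsIter f n p` : `p` is (a representative of) `f^[n]`, the compositional product of
`n` copies of `f`, with `f^[0] := id`. -/
def IsIter (f : Problem) : ℕ → Problem → Prop
  | 0, p => p = idp
  | n + 1, p => ∃ q, IsIter f n q ∧ IsCompProd f q p

/-- The constant sequence with value `n`. -/
def cseq (n : ℕ) : Baire := fun _ => n

/-- The limited principle of omniscience. -/
def LPO : Problem := fun x =>
  {y | ((∃ n, x n = 0) ∧ y = cseq 0) ∨ ((∀ n, x n ≠ 0) ∧ y = cseq 1)}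

/-- The lesser limited principle of omniscience. -/
def LLPO : Problem := fun x =>
  {y | (∀ i j, x i ≠ 0 → x j ≠ 0 → i = j) ∧
       ((y = cseq 0 ∧ ∀ i, Even i → x i = 0) ∨
        (y = cseq 1 ∧ ∀ i, Odd i → x i = 0))}

/-- Turing reducibility between points of Baire space: `x` is computable from
oracle `y`. -/
def TuringLE (x y : Baire) : Prop :=
  ∃ φ : List ℕ → ℕ → Option ℕ, Computable₂ φ ∧
    ∀ n : ℕ, (∃ m, φ (initSeg y m) n = some (x n)) ∧
      (∀ m v, φ (initSeg y m) n = some v → v = x n)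

/-- Mutual Turing reducibility: `x` and `y` have the same Turing degree. -/
def TuringEquiv (x y : Baire) : Prop := TuringLE x y ∧ TuringLE y x

/-- Strict Turing reducibility. -/
def TuringLT (x y : Baire) : Prop := TuringLE x y ∧ ¬ TuringLE y x

/-- The problem `w_a`, for `a` a representative of a (non-zero) Turing degree. -/
def w (a : Baire) : Problem := fun x =>
  {y | (Computable x ∧ ¬ Computable y) ∨ (¬ Computable x ∧ TuringEquiv y a)}

/-- `k`-weak continuity of a problem. -/
def WeaklyContinuous (k : ℕ) (f : Problem) : Prop :=
  ∀ x ∈ Dom f, ∀ y : ℕ → Baire, (∀ n, y n ∈ Dom f) →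
    Filter.Tendsto y Filter.atTop (nhds x) →
    ∃ u ∈ f x, ∀ l < k, ∀ m : ℕ, ∃ n ≥ m,
      ∃ v ∈ f (y (n * k + l)), initSeg u m = initSeg v m

/-- Product of two problems. -/
def prodP (f g : Problem) : Problem := fun z =>
  {w | ∃ x y u v, z = pair x y ∧ w = pair u v ∧ u ∈ f x ∧ v ∈ g y}

/-- `powP f n` : the product of `n` copies of `f` (for `n ≥ 1`). -/
def powP (f : Problem) : ℕ → Problem
  | 0 => idp
  | 1 => f
  | n + 2 => prodP f (powP f (n + 1))

/-- A problem `f` is `k`-continuous: it has a realizer `r` (defined on a domain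
`D ⊇ Dom f`) together with a partition of `D` into at most `k` pieces (given by a
coloring `c`) such that `r` is continuous on each piece. -/
def kContinuous (k : ℕ) (f : Problem) : Prop :=
  ∃ (D : Set Baire) (r : Baire → Baire) (c : Baire → Fin k),
    Dom f ⊆ D ∧ (∀ x ∈ Dom f, r x ∈ f x) ∧
    ∀ i : Fin k, ContinuousOn r {x ∈ D | c x = i}

/-! Feed a reduction of `w a` to `w b` the non-computable instance `b` itself. Whatever `k b` is,
`b` solves it in `w b` (it is non-computable, and it has degree `b`), so `h ⟨b, b⟩` solves `b` in
`w a`, i.e. has degree `a`. As `h` is computable, `a ≤_T h ⟨b, b⟩ ≤_T ⟨b, b⟩ ≤_T b`; so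
`w a ≤_W w b` forces `a ≤_T b`, and symmetrically. The only real work is transitivity of `≤_T`
for oracle functionals reading finite prefixes. -/

open Filter

section InitSeg

variable (x : Baire)

@[simp] lemma length_initSeg (m : ℕ) : (initSeg x m).length = m := by simp [initSeg]

lemma getElem?_initSeg_of_lt {m n : ℕ} (h : n < m) : (initSeg x m)[n]? = some (x n) := by
  simp [initSeg, h]

lemma eq_of_getElem?_initSeg_eq_some {m n v : ℕ} (h : (initSeg x m)[n]? = some v) : v = x n := by
  by_cases hn : n < m
  · rw [getElem?_initSeg_of_lt x hn] at h
    exact (Option.some.inj h).symm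
  · simp [initSeg, hn] at h

lemma take_initSeg {m M : ℕ} (h : m ≤ M) : (initSeg x M).take m = initSeg x m := by
  simp [initSeg, ← List.map_take, List.take_range, min_eq_left h]

lemma initSeg_succ (l : ℕ) : initSeg x (l + 1) = initSeg x l ++ [x l] := by
  simp [initSeg, List.range_succ]

end InitSeg

lemma List.findSome?_range_succ {α : Type*} (f : ℕ → Option α) (c : ℕ) :
    (List.range (c + 1)).findSome? f = ((List.range c).findSome? f <|> f c) := by
  simp [List.range_succ, List.findSome?_append]

lemma Computable.findSome?_range {α σ : Type*} [Primcodable α] [Primcodable σ]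
    {f : α → ℕ → Option σ} {c : α → ℕ} (hf : Computable₂ f) (hc : Computable c) :
    Computable fun a => (List.range (c a)).findSome? (f a) := by
  have hstep : Computable₂ fun a (p : ℕ × Option σ) => (p.2 <|> f a p.1) :=
    (Primrec.option_orElse.to_comp.comp (Computable.snd.comp Computable.snd)
      (hf.comp Computable.fst (Computable.fst.comp Computable.snd))).to₂
  refine (Computable.nat_rec hc (Computable.const none) hstep).of_eq fun a => ?_
  induction c a with
  | zero => rfl
  | succ c ih => rw [List.findSome?_range_succ, ← ih]

lemma List.findSome?_eq_some_of_mem {α β : Type*} {l : List α} {f : α → Option β} {a : α}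
    {b : β} (ha : a ∈ l) (hfa : f a = some b) (hf : ∀ a ∈ l, ∀ b', f a = some b' → b' = b) :
    l.findSome? f = some b := by
  obtain ⟨c, hc⟩ := Option.isSome_iff_exists.mp
    (List.findSome?_isSome_iff (f := f).mpr ⟨a, ha, by rw [hfa]; rfl⟩)
  obtain ⟨a', ha', hfa'⟩ := List.exists_of_findSome?_eq_some hc
  rw [hc, hf a' ha' c hfa']

/-- `TuringLE x y` and `ComputableOn` unfold to `OracleComputes`. -/
def OracleComputes (Φ : List ℕ → ℕ → Option ℕ) (y x : Baire) : Prop :=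
  ∀ n, (∃ m, Φ (initSeg y m) n = some (x n)) ∧ ∀ m v, Φ (initSeg y m) n = some v → v = x n

section OracleComp

variable {φ ψ : List ℕ → ℕ → Option ℕ}

/-- `ψ` need not answer on a longer prefix once it has answered, so every prefix of `σ` is
tried. -/
def oracleQuery (ψ : List ℕ → ℕ → Option ℕ) (σ : List ℕ) (i : ℕ) : Option ℕ :=
  (List.range (σ.length + 1)).findSome? fun m => ψ (σ.take m) i

def oracleQueryPrefix (ψ : List ℕ → ℕ → Option ℕ) (σ : List ℕ) : ℕ → Option (List ℕ)
  | 0 => some []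
  | l + 1 => (oracleQueryPrefix ψ σ l).bind fun t => (oracleQuery ψ σ l).map (t ++ [·])

/-- Runs `φ` on the prefixes of the oracle that `ψ` decodes from `σ`. -/
def oracleComp (φ ψ : List ℕ → ℕ → Option ℕ) (σ : List ℕ) (n : ℕ) : Option ℕ :=
  (List.range (σ.length + 1)).findSome? fun l => (oracleQueryPrefix ψ σ l).bind (φ · n)

lemma computable_oracleQuery (hψ : Computable₂ ψ) : Computable₂ (oracleQuery ψ) :=
  (Computable.findSome?_range (f := fun (p : List ℕ × ℕ) m => ψ (p.1.take m) p.2)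
    (hψ.comp (Primrec.list_take.to_comp.comp Computable.snd (Computable.fst.comp Computable.fst))
      (Computable.snd.comp Computable.fst)).to₂
    (Computable.succ.comp (Computable.list_length.comp Computable.fst))).to₂

lemma computable_oracleQueryPrefix (hψ : Computable₂ ψ) :
    Computable₂ (oracleQueryPrefix ψ) := by
  have hstep : Computable₂ fun (p : List ℕ × ℕ) (q : ℕ × Option (List ℕ)) =>
      q.2.bind fun t => (oracleQuery ψ p.1 q.1).map (t ++ [·]) :=
    (Computable.option_bind (Computable.snd.comp Computable.snd)
      (Computable.option_map
        ((computable_oracleQuery hψ).comp (Computable.fst.comp (Computable.fst.comp Computable.fst))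
          (Computable.fst.comp (Computable.snd.comp Computable.fst)))
        (Computable.list_concat.comp (Computable.snd.comp Computable.fst)
          Computable.snd).to₂).to₂).to₂
  refine (Computable.nat_rec Computable.snd (Computable.const (some [])) hstep).of_eq
    fun p => ?_
  induction p.2 with
  | zero => rfl
  | succ l ih => simp only [oracleQueryPrefix, ← ih]

lemma computable_oracleComp (hφ : Computable₂ φ) (hψ : Computable₂ ψ) :
    Computable₂ (oracleComp φ ψ) :=
  (Computable.findSome?_range
    (f := fun (p : List ℕ × ℕ) l => (oracleQueryPrefix ψ p.1 l).bind (φ · p.2))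
    (Computable.option_bind
      ((computable_oracleQueryPrefix hψ).comp (Computable.fst.comp Computable.fst)
        Computable.snd)
      (hφ.comp Computable.snd (Computable.snd.comp (Computable.fst.comp Computable.fst))).to₂).to₂
    (Computable.succ.comp (Computable.list_length.comp Computable.fst))).to₂

end OracleComp

namespace OracleComputes

variable {φ ψ : List ℕ → ℕ → Option ℕ} {x y z : Baire}

lemma eq_of_apply_take_initSeg_eq_some (hψ : OracleComputes ψ z y) {M m i v : ℕ}
    (hm : m < M + 1) (h : ψ ((initSeg z M).take m) i = some v) : v = y i := by
  rw [take_initSeg z (Nat.lt_succ_iff.mp hm)] at h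
  exact (hψ i).2 m v h

lemma eq_of_oracleQuery_eq_some (hψ : OracleComputes ψ z y) {M i v : ℕ}
    (h : oracleQuery ψ (initSeg z M) i = some v) : v = y i := by
  obtain ⟨m, hm, hψm⟩ := List.exists_of_findSome?_eq_some h
  rw [length_initSeg, List.mem_range] at hm
  exact hψ.eq_of_apply_take_initSeg_eq_some hm hψm

lemma eventually_oracleQuery_eq (hψ : OracleComputes ψ z y) (i : ℕ) :
    ∀ᶠ M in atTop, oracleQuery ψ (initSeg z M) i = some (y i) := by
  obtain ⟨m, hm⟩ := (hψ i).1
  filter_upwards [eventually_ge_atTop m] with M hM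
  refine List.findSome?_eq_some_of_mem (a := m) ?_ ?_ fun k hk v hv => ?_
  · rw [length_initSeg, List.mem_range]
    omega
  · rwa [take_initSeg z hM]
  · rw [length_initSeg, List.mem_range] at hk
    exact hψ.eq_of_apply_take_initSeg_eq_some hk hv

lemma eq_of_oracleQueryPrefix_eq_some (hψ : OracleComputes ψ z y) {M : ℕ} :
    ∀ {l t}, oracleQueryPrefix ψ (initSeg z M) l = some t → t = initSeg y l
  | 0, t, h => by simpa [oracleQueryPrefix, initSeg, eq_comm] using h
  | l + 1, t, h => by
    obtain ⟨t₀, ht₀, hmap⟩ := Option.bind_eq_some_iff.mp h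
    obtain ⟨v, hv, rfl⟩ := Option.map_eq_some_iff.mp hmap
    rw [hψ.eq_of_oracleQueryPrefix_eq_some ht₀, hψ.eq_of_oracleQuery_eq_some hv, initSeg_succ]

lemma eventually_oracleQueryPrefix_eq (hψ : OracleComputes ψ z y) :
    ∀ l, ∀ᶠ M in atTop, oracleQueryPrefix ψ (initSeg z M) l = some (initSeg y l)
  | 0 => .of_forall fun _ => by simp [oracleQueryPrefix, initSeg]
  | l + 1 => by
    filter_upwards [hψ.eventually_oracleQueryPrefix_eq l, hψ.eventually_oracleQuery_eq l]
      with M hl hq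
    simp [oracleQueryPrefix, hl, hq, initSeg_succ]

theorem oracleComp (hφ : OracleComputes φ y x) (hψ : OracleComputes ψ z y) :
    OracleComputes (oracleComp φ ψ) z x := by
  have sound : ∀ M n l v, (oracleQueryPrefix ψ (initSeg z M) l).bind (φ · n) = some v →
      v = x n := fun M n l v h => by
    obtain ⟨t, ht, hφt⟩ := Option.bind_eq_some_iff.mp h
    rw [hψ.eq_of_oracleQueryPrefix_eq_some ht] at hφt
    exact (hφ n).2 l v hφt
  refine fun n => ⟨?_, fun M v h => ?_⟩
  · obtain ⟨m, hm⟩ := (hφ n).1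
    obtain ⟨M, hM, hpre⟩ :=
      ((eventually_ge_atTop m).and (hψ.eventually_oracleQueryPrefix_eq m)).exists
    refine ⟨M, List.findSome?_eq_some_of_mem (a := m) ?_ ?_ fun l _ v hv => sound M n l v hv⟩
    · rw [length_initSeg, List.mem_range]
      omega
    · rwa [hpre, Option.bind_some]
  · obtain ⟨l, -, hl⟩ := List.exists_of_findSome?_eq_some h
    exact sound M n l v hl

end OracleComputes

lemma TuringLE.refl (x : Baire) : TuringLE x x :=
  ⟨fun σ n => σ[n]?, Computable.list_getElem?, fun n =>
    ⟨⟨n + 1, getElem?_initSeg_of_lt x n.lt_succ_self⟩,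
      fun _ _ h => eq_of_getElem?_initSeg_eq_some x h⟩⟩

lemma TuringLE.trans {x y z : Baire} (hxy : TuringLE x y) (hyz : TuringLE y z) :
    TuringLE x z := by
  obtain ⟨φ, hφc, hφ⟩ := hxy
  obtain ⟨ψ, hψc, hψ⟩ := hyz
  exact ⟨oracleComp φ ψ, computable_oracleComp hφc hψc,
    OracleComputes.oracleComp (x := x) hφ hψ⟩

lemma turingLE_pair_self (x : Baire) : TuringLE (pair x x) x := by
  have pair_self : ∀ n, pair x x n = x (n / 2) := fun n => by unfold pair; split_ifs <;> rfl
  refine ⟨fun σ n => σ[n / 2]?, ?_, fun n => ⟨⟨n / 2 + 1, ?_⟩, fun m v h => ?_⟩⟩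
  · exact (Computable.list_getElem?.comp Computable.fst
      ((Primrec.nat_div.comp Primrec.snd (Primrec.const 2)).to_comp)).to₂
  · rw [pair_self]
    exact getElem?_initSeg_of_lt x (n / 2).lt_succ_self
  · rw [pair_self]
    exact eq_of_getElem?_initSeg_eq_some x h

lemma ComputableOn.turingLE {F : Baire → Baire} {D : Set Baire} (hF : ComputableOn F D)
    {p : Baire} (hp : p ∈ D) : TuringLE (F p) p :=
  let ⟨φ, hφc, hφ⟩ := hF
  ⟨φ, hφc, hφ p hp⟩

lemma turingLE_of_wRed_w {a b : Baire} (hb : ¬ Computable b) (hred : WRed (w a) (w b)) :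
    TuringLE a b := by
  obtain ⟨h, k, -, hh, hsol⟩ := hred
  have hbdom : b ∈ Dom (w a) := ⟨a, Or.inr ⟨hb, .refl a, .refl a⟩⟩
  have hbsol : b ∈ w b (k b) := by
    by_cases hk : Computable (k b)
    · exact Or.inl ⟨hk, hb⟩
    · exact Or.inr ⟨hk, .refl b, .refl b⟩
  have hdeg : TuringEquiv (h (pair b b)) a := by
    rcases (hsol b hbdom).2 b hbsol with ⟨hbc, -⟩ | ⟨-, hdeg⟩
    · exact absurd hbc hb
    · exact hdeg
  exact hdeg.2.trans ((hh.turingLE ⟨b, hbdom, b, hbsol, rfl⟩).trans (turingLE_pair_self b))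

/-- If `a` and `b` represent incomparable non-zero Turing degrees, then `w_a` and `w_b`
are Weihrauch incomparable. -/
theorem w_incomparable (a b : Baire) (ha : ¬ Computable a) (hb : ¬ Computable b)
    (hab : ¬ TuringLE a b) (hba : ¬ TuringLE b a) :
    ¬ WRed (w a) (w b) ∧ ¬ WRed (w b) (w a) :=
  ⟨fun h => hab (turingLE_of_wRed_w hb h), fun h => hba (turingLE_of_wRed_w ha h)⟩
end

section
/- Let a be a non-zero Turing degree, let n ≥ 2, and let r be a problem with r^[n] ≡_W w_a (i.e., r is an n-th root of w_a). Then r has a computable instance x ∈ dom(r) all of whose solutions y ∈ r(x) are non-computable. -/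
section Aux

/-- Every computable instance has a computable solution. -/
def HasCompSol (f : Problem) : Prop :=
  ∀ x ∈ Dom f, Computable x → ∃ y ∈ f x, Computable y

lemma computable_initSeg {x : Baire} (hx : Computable x) :
    Computable fun m => initSeg x m := by
  have h1 : Computable fun p : ℕ × List ℕ => p.2 ++ [x p.1] :=
    Primrec.list_append.to_comp.comp Computable.snd
      (Primrec.list_cons.to_comp.comp (hx.comp Computable.fst) (Computable.const []))
  have h2 := Computable.nat_rec Computable.id (Computable.const ([] : List ℕ))
    ((h1.comp Computable.snd).to₂)
  refine h2.of_eq fun m => ?_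
  induction m with
  | zero => simp [initSeg]
  | succ m ih => simp only [initSeg, List.range_succ, List.map_append] at ih ⊢; rw [← ih]; rfl

lemma computable_pair {x y : Baire} (hx : Computable x) (hy : Computable y) :
    Computable (pair x y) := by
  have hmod : Computable fun n : ℕ => n % 2 :=
    (Primrec.nat_mod.comp Primrec.id (Primrec.const 2)).to_comp
  have hdiv : Computable fun n : ℕ => n / 2 :=
    (Primrec.nat_div.comp Primrec.id (Primrec.const 2)).to_comp
  have h := Computable.nat_casesOn hmod (hx.comp hdiv)
    ((hy.comp (hdiv.comp Computable.fst)).to₂)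
  refine h.of_eq fun n => ?_
  by_cases h2 : n % 2 = 0
  · simp [pair, h2]
  · rcases Nat.exists_eq_succ_of_ne_zero h2 with ⟨k, hk⟩
    simp [pair, hk, h2]

lemma computableOn_apply {F : Baire → Baire} {D : Set Baire}
    (hF : ComputableOn F D) {x : Baire} (hxD : x ∈ D) (hx : Computable x) :
    Computable (F x) := by
  obtain ⟨φ, hφ, hspec⟩ := hF
  have hf : Computable₂ fun (n m : ℕ) => φ (initSeg x m) n :=
    (hφ.comp ((computable_initSeg hx).comp Computable.snd) Computable.fst).to₂
  have hpr : Partrec fun n => Nat.rfindOpt fun m => φ (initSeg x m) n :=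
    Partrec.rfindOpt hf
  refine hpr.of_eq_tot fun n => ?_
  obtain ⟨⟨m, hm⟩, hcons⟩ := hspec x hxD n
  have hdom : (Nat.rfindOpt fun m => φ (initSeg x m) n).Dom :=
    Nat.rfindOpt_dom.2 ⟨m, F x n, Option.mem_def.2 hm⟩
  have hmem := Part.get_mem hdom
  obtain ⟨m', hm'⟩ := Nat.rfindOpt_spec hmem
  have heq := hcons m' _ (Option.mem_def.1 hm')
  rwa [heq] at hmem

lemma hasCompSol_of_wred {f g : Problem} (hred : WRed f g) (hg : HasCompSol g) :
    HasCompSol f := by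
  obtain ⟨h, k, hk, hh, hmain⟩ := hred
  intro x hx hcx
  obtain ⟨hkdom, hsol⟩ := hmain x hx
  obtain ⟨y, hy, hcy⟩ := hg (k x) hkdom (computableOn_apply hk hx hcx)
  exact ⟨h (pair x y), hsol y hy,
    computableOn_apply hh ⟨x, hx, y, hy, rfl⟩ (computable_pair hcx hcy)⟩

lemma hasCompSol_pcomp {f g : Problem} (hf : HasCompSol f) (hg : HasCompSol g) :
    HasCompSol (pcomp f g) := by
  intro x hx hcx
  obtain ⟨z, hsub, y0, hy0, _⟩ := hx
  obtain ⟨y, hy, hcy⟩ := hg x ⟨y0, hy0⟩ hcx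
  obtain ⟨u, hu, hcu⟩ := hf y (hsub hy) hcy
  exact ⟨u, ⟨hsub, y, hy, hu⟩, hcu⟩

lemma hasCompSol_idp : HasCompSol idp := fun x _ hcx => ⟨x, Set.mem_singleton x, hcx⟩

lemma hasCompSol_iter {r : Problem} (hr : HasCompSol r) :
    ∀ n p, IsIter r n p → HasCompSol p := by
  intro n
  induction n with
  | zero =>
    intro p hp
    rw [show p = idp from hp]
    exact hasCompSol_idp
  | succ n ih =>
    intro p hp
    obtain ⟨q, hq, ⟨⟨f', g', hf', hg', hpe⟩, _⟩⟩ := hp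
    exact hasCompSol_of_wred hpe.1
      (hasCompSol_pcomp (hasCompSol_of_wred hf' hr) (hasCompSol_of_wred hg' (ih q hq)))

end Aux

/-- Any `n`-th root (`n ≥ 2`) of `w_a`, for `a` non-computable, has a computable
instance all of whose solutions are non-computable. -/
theorem root_cmp_inst_ncmp_sol (a : Baire) (ha : ¬ Computable a) (n : ℕ) (hn : 2 ≤ n)
    (r : Problem) (hroot : ∃ p : Problem, IsIter r n p ∧ WEquiv p (w a)) :
    ∃ x ∈ Dom r, Computable x ∧ ∀ y ∈ r x, ¬ Computable y := by
  obtain ⟨p, hiter, hpeq⟩ := hroot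
  by_contra hcon
  push_neg at hcon
  have hr : HasCompSol r := fun x hx hcx => hcon x hx hcx
  have hw : HasCompSol (w a) :=
    hasCompSol_of_wred hpeq.2 (hasCompSol_iter hr n p hiter)
  have hc0 : Computable (cseq 0) := Computable.const 0
  have hdom : cseq 0 ∈ Dom (w a) := ⟨a, Or.inl ⟨hc0, ha⟩⟩
  obtain ⟨y, hy, hcy⟩ := hw (cseq 0) hdom hc0
  rcases hy with ⟨_, hny⟩ | ⟨hnc, _⟩
  · exact hny hcy
  · exact hnc hc0
end

section
/- LPO is 1-weakly discontinuous (i.e., not 1-weakly continuous) and LLPO is 2-weakly discontinuous (i.e., not 2-weakly continuous). -/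
/-- `LPO` is `1`-weakly discontinuous and `LLPO` is `2`-weakly discontinuous. -/
theorem lpo_llpo_weakly_discontinuous :
    ¬ WeaklyContinuous 1 LPO ∧ ¬ WeaklyContinuous 2 LLPO := by
  constructor
  · intro H
    have hx : cseq 1 ∈ Dom LPO := ⟨cseq 1, Or.inr ⟨fun n => one_ne_zero, rfl⟩⟩
    set y : ℕ → Baire := fun n i => if i = n then 0 else 1 with hy
    have hdom : ∀ n, y n ∈ Dom LPO := fun n => ⟨cseq 0, Or.inl ⟨⟨n, by simp [hy]⟩, rfl⟩⟩
    have htend : Filter.Tendsto y Filter.atTop (nhds (cseq 1)) := by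
      rw [tendsto_pi_nhds]
      intro i
      apply Filter.Tendsto.congr' _ tendsto_const_nhds
      filter_upwards [Filter.eventually_gt_atTop i] with n hn
      simp [hy, cseq, Nat.ne_of_lt hn]
    obtain ⟨u, hu, hspec⟩ := H (cseq 1) hx y hdom htend
    have hu1 : u = cseq 1 := by
      rcases hu with ⟨⟨n, hn⟩, _⟩ | ⟨_, h⟩
      · exact absurd hn one_ne_zero
      · exact h
    obtain ⟨n, hn, v, hv, heq⟩ := hspec 0 (by norm_num) 1
    have hv0 : v = cseq 0 := by
      rcases hv with ⟨_, h⟩ | ⟨h, _⟩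
      · exact h
      · exact absurd (by simp [hy] : y (n * 1 + 0) (n * 1 + 0) = 0) (h _)
    rw [hu1, hv0] at heq
    simp [initSeg, cseq] at heq
  · intro H
    have hx : cseq 0 ∈ Dom LLPO :=
      ⟨cseq 0, fun i j hi _ => absurd rfl hi, Or.inl ⟨rfl, fun i _ => rfl⟩⟩
    set y : ℕ → Baire := fun n i => if i = n then 1 else 0 with hy
    have hone : ∀ n i j, y n i ≠ 0 → y n j ≠ 0 → i = j := by
      intro n i j hi hj
      simp [hy] at hi hj
      by_contra
      rcases hi with ⟨hi, -⟩
      rcases hj with ⟨hj, -⟩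
      omega
    have hdom : ∀ n, y n ∈ Dom LLPO := by
      intro n
      rcases Nat.even_or_odd n with he | ho
      · refine ⟨cseq 1, hone n, Or.inr ⟨rfl, fun i hi => ?_⟩⟩
        have : i ≠ n := by rintro rfl; exact (Nat.not_odd_iff_even.mpr he) hi
        simp [hy, this]
      · refine ⟨cseq 0, hone n, Or.inl ⟨rfl, fun i hi => ?_⟩⟩
        have : i ≠ n := by rintro rfl; exact (Nat.not_even_iff_odd.mpr ho) hi
        simp [hy, this]
    have htend : Filter.Tendsto y Filter.atTop (nhds (cseq 0)) := by
      rw [tendsto_pi_nhds]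
      intro i
      apply Filter.Tendsto.congr' _ tendsto_const_nhds
      filter_upwards [Filter.eventually_gt_atTop i] with n hn
      simp [hy, cseq, Nat.ne_of_lt hn]
    obtain ⟨u, hu, hspec⟩ := H (cseq 0) hx y hdom htend
    rcases hu with ⟨-, ⟨hu0, -⟩ | ⟨hu1, -⟩⟩
    · obtain ⟨n, hn, v, hv, heq⟩ := hspec 0 (by norm_num) 1
      have hv1 : v = cseq 1 := by
        rcases hv with ⟨-, ⟨-, h⟩ | ⟨h, -⟩⟩
        · exfalso
          have := h (n * 2 + 0) ⟨n, by ring⟩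
          simp [hy] at this
        · exact h
      rw [hu0, hv1] at heq
      simp [initSeg, cseq] at heq
    · obtain ⟨n, hn, v, hv, heq⟩ := hspec 1 (by norm_num) 1
      have hv0 : v = cseq 0 := by
        rcases hv with ⟨-, ⟨h, -⟩ | ⟨-, h⟩⟩
        · exact h
        · exfalso
          have := h (n * 2 + 1) ⟨n, by ring⟩
          simp [hy] at this
      rw [hu1, hv0] at heq
      simp [initSeg, cseq] at heq
end

section
/- Let f and g be problems and let k ∈ ℕ be positive. If f ≤*_W g (f is continuously Weihrauch reducible to g) and g is k-weakly continuous, then f is k-weakly continuous. -/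
lemma initSeg_eq_iff' {a b : Baire} {m : ℕ} :
    initSeg a m = initSeg b m ↔ ∀ i < m, a i = b i := by
  simp [initSeg, List.map_eq_map_iff]

lemma nhds_cyl' {z : Baire} {U : Set Baire} (hU : U ∈ nhds z) :
    ∃ M, PiNat.cylinder z M ⊆ U := by
  obtain ⟨t, ⟨w, n, rfl⟩, hzt, htU⟩ :=
    (PiNat.isTopologicalBasis_cylinders (fun _ : ℕ => ℕ)).mem_nhds_iff.mp hU
  exact ⟨n, fun p hp => htU (fun i hi => (hp i hi).trans (hzt i hi))⟩

lemma cyl_mem_nhds' (z : Baire) (M : ℕ) : PiNat.cylinder z M ∈ nhds z :=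
  (PiNat.isOpen_cylinder (fun _ : ℕ => ℕ) z M).mem_nhds (PiNat.self_mem_cylinder z M)

/-- `k`-weak continuity transfers downward along continuous Weihrauch reducibility. -/
theorem weaklyContinuous_of_contWRed (f g : Problem) (k : ℕ) (hk : 0 < k)
    (hred : ContWRed f g) (hg : WeaklyContinuous k g) :
    WeaklyContinuous k f := by
  obtain ⟨h, K, hKc, hhc, hmain⟩ := hred
  intro x hx y hy hty
  obtain ⟨hKx, hfx⟩ := hmain x hx
  -- K ∘ y tends to K x
  have hKy : Filter.Tendsto (fun n => K (y n)) Filter.atTop (nhds (K x)) := by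
    have h1 : Filter.Tendsto y Filter.atTop (nhdsWithin x (Dom f)) :=
      tendsto_nhdsWithin_of_tendsto_nhds_of_eventually_within y hty
        (Filter.Eventually.of_forall hy)
    exact (hKc x hx).tendsto.comp h1
  obtain ⟨u', hu'g, hu'⟩ := hg (K x) hKx (fun n => K (y n))
    (fun n => (hmain (y n) (hy n)).1) hKy
  set S : Set Baire := {p | ∃ x ∈ Dom f, ∃ y ∈ g (K x), p = pair x y} with hS
  have hpS : pair x u' ∈ S := ⟨x, hx, u', hu'g, rfl⟩
  refine ⟨h (pair x u'), hfx u' hu'g, ?_⟩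
  intro l hl m
  -- continuity of h at pair x u' within S, with target cylinder of length m
  have hcont : {p | h p ∈ PiNat.cylinder (h (pair x u')) m} ∈ nhdsWithin (pair x u') S :=
    (hhc (pair x u') hpS) (cyl_mem_nhds' _ m)
  obtain ⟨U, hU, hUsub⟩ := mem_nhdsWithin_iff_exists_mem_nhds_inter.mp hcont
  obtain ⟨M, hM⟩ := nhds_cyl' hU
  -- eventually y j agrees with x up to M
  have hev : ∀ᶠ j in Filter.atTop, y j ∈ PiNat.cylinder x M :=
    hty.eventually ((eventually_mem_nhds_iff.mpr (cyl_mem_nhds' x M)).mono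
      (fun _ hz => mem_of_mem_nhds hz))
  obtain ⟨N, hN⟩ := Filter.eventually_atTop.mp hev
  obtain ⟨n, hn, v', hv'g, hv'⟩ := hu' l hl (max m (max M N))
  have hv'eq : ∀ i < max m (max M N), u' i = v' i := initSeg_eq_iff'.mp hv'
  set j := n * k + l with hj
  have hnj : n ≤ j := le_trans (by nlinarith) (Nat.le_add_right _ _)
  have hyjM : y j ∈ PiNat.cylinder x M :=
    hN j (le_trans (le_trans (le_max_right M N) (le_trans (le_max_right m _) hn)) hnj)
  have hpS' : pair (y j) v' ∈ S := ⟨y j, hy j, v', hv'g, rfl⟩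
  have hcylM : pair (y j) v' ∈ PiNat.cylinder (pair x u') M := by
    intro i hi
    have hi2 : i / 2 < M := lt_of_le_of_lt (Nat.div_le_self i 2) hi
    by_cases hp : i % 2 = 0 <;> simp only [pair, hp, if_true, if_false]
    · exact hyjM _ hi2
    · exact (hv'eq _ (lt_of_lt_of_le hi2 (le_trans (le_max_left M N) (le_max_right m _)))).symm
  have hkey : h (pair (y j) v') ∈ PiNat.cylinder (h (pair x u')) m :=
    hUsub ⟨hM hcylM, hpS'⟩
  refine ⟨n, le_trans (le_max_left m _) hn, h (pair (y j) v'),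
    (hmain (y j) (hy j)).2 v' hv'g, ?_⟩
  exact initSeg_eq_iff'.mpr (fun i hi => (hkey i hi).symm)
end

section
/- Let f be a problem that is 1-weakly discontinuous (i.e., not 1-weakly continuous). Then LPO ≤*_W f, i.e., LPO is continuously Weihrauch reducible to f. -/
lemma cyl_mem_nhds (z : Baire) (m : ℕ) :
    {w : Baire | ∀ j < m, w j = z j} ∈ nhds z := by
  have h : {w : Baire | ∀ j < m, w j = z j}
      = Set.pi (↑(Finset.range m)) (fun j => ({z j} : Set ℕ)) := by
    ext w
    simp [Set.mem_pi]
  rw [h]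
  exact set_pi_mem_nhds (Finset.range m).finite_toSet
    (fun j _ => IsOpen.mem_nhds (isOpen_discrete _) rfl)

lemma pair_even (x y : Baire) (m : ℕ) : pair x y (2 * m) = x m := by
  have h1 : 2 * m % 2 = 0 := by omega
  have h2 : 2 * m / 2 = m := by omega
  simp [pair, h1, h2]

lemma pair_odd (x y : Baire) (m : ℕ) : pair x y (2 * m + 1) = y m := by
  have h1 : (2 * m + 1) % 2 = 1 := by omega
  have h2 : (2 * m + 1) / 2 = m := by omega
  simp [pair, h1, h2]

lemma mem_dom_LPO (z : Baire) : z ∈ Dom LPO := by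
  by_cases hz : ∃ n, z n = 0
  · exact ⟨cseq 0, Or.inl ⟨hz, rfl⟩⟩
  · push_neg at hz
    exact ⟨cseq 1, Or.inr ⟨hz, rfl⟩⟩

/-- `LPO` continuously Weihrauch reduces to any `1`-weakly discontinuous problem. -/
theorem lpo_red_of_one_weakly_discontinuous (f : Problem)
    (hf : ¬ WeaklyContinuous 1 f) : ContWRed LPO f := by
  classical
  rw [WeaklyContinuous] at hf
  push_neg at hf
  obtain ⟨x, hx, y, hy, hty, hsep⟩ := hf
  have hagree : ∀ s : ℕ, ∃ n, s ≤ n ∧ ∀ i < s, y n i = x i := by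
    intro s
    have h1 : ∀ i, ∀ᶠ n in Filter.atTop, y n i = x i := by
      intro i
      have h := (tendsto_pi_nhds.mp hty) i
      rw [nhds_discrete, Filter.tendsto_pure] at h
      exact h
    have h2 : ∀ᶠ n in Filter.atTop, ∀ i ∈ Finset.range s, y n i = x i :=
      (Filter.eventually_all_finset _).mpr (fun i _ => h1 i)
    obtain ⟨n, hn1, hn2⟩ := ((Filter.eventually_ge_atTop s).and h2).exists
    exact ⟨n, hn1, fun i hi => hn2 i (Finset.mem_range.mpr hi)⟩
  choose N hN1 hN2 using hagree
  set k : Baire → Baire := fun z =>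
    if h : ∃ n, z n = 0 then y (N (Nat.find h)) else x with hkdef
  set H : Baire → Baire := fun p =>
    if ∃ m, p (2 * m) = 0 then cseq 0 else cseq 1 with hHdef
  -- Continuity of k everywhere
  have contk : Continuous k := by
    rw [continuous_iff_continuousAt]
    intro z
    by_cases hz : ∃ n, z n = 0
    · -- locally constant near z
      have heq : k =ᶠ[nhds z] fun _ => k z := by
        filter_upwards [cyl_mem_nhds z (Nat.find hz + 1)] with w hw
        have hw0 : ∃ n, w n = 0 := ⟨Nat.find hz, by
          rw [hw (Nat.find hz) (Nat.lt_succ_self _)]; exact Nat.find_spec hz⟩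
        have hfind : Nat.find hw0 = Nat.find hz := by
          apply le_antisymm
          · exact Nat.find_le (by
              rw [hw (Nat.find hz) (Nat.lt_succ_self _)]; exact Nat.find_spec hz)
          · by_contra hlt
            push_neg at hlt
            have h0 : w (Nat.find hw0) = 0 := Nat.find_spec hw0
            rw [hw (Nat.find hw0) (by omega)] at h0
            exact Nat.find_min hz hlt h0
        show k w = k z
        rw [hkdef]
        simp only [dif_pos hz, dif_pos hw0, hfind]
      exact (Filter.tendsto_congr' heq).mpr tendsto_const_nhds
    · have hkz : k z = x := by rw [hkdef]; simp only [dif_neg hz]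
      rw [ContinuousAt, hkz]
      apply tendsto_pi_nhds.mpr
      intro i
      rw [congrFun (nhds_discrete ℕ) (x i), Filter.tendsto_pure]
      filter_upwards [cyl_mem_nhds z (i + 1)] with w hw
      by_cases hw0 : ∃ n, w n = 0
      · have hsgt : i < Nat.find hw0 := by
          by_contra hcon
          push_neg at hcon
          have h0 : w (Nat.find hw0) = 0 := Nat.find_spec hw0
          rw [hw (Nat.find hw0) (by omega)] at h0
          exact hz ⟨Nat.find hw0, h0⟩
        show k w i = x i
        rw [hkdef]
        simp only [dif_pos hw0]
        exact hN2 (Nat.find hw0) i hsgt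
      · show k w i = x i
        rw [hkdef]
        simp only [dif_neg hw0]
  refine ⟨H, k, contk.continuousOn, ?_, ?_⟩
  · -- continuity of H on the domain
    intro p hp
    obtain ⟨z, _, v, hv, rfl⟩ := hp
    by_cases hz : ∃ n, z n = 0
    · -- H is locally cseq 0
      have hHp : H (pair z v) = cseq 0 := by
        rw [hHdef]
        exact if_pos ⟨Nat.find hz, by rw [pair_even]; exact Nat.find_spec hz⟩
      have heq : ∀ᶠ q in nhdsWithin (pair z v)
          {p | ∃ x ∈ Dom LPO, ∃ y ∈ f (k x), p = pair x y}, H q = H (pair z v) := by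
        apply Filter.Eventually.filter_mono nhdsWithin_le_nhds
        filter_upwards [cyl_mem_nhds (pair z v) (2 * Nat.find hz + 1)] with q hq
        have h0 : q (2 * Nat.find hz) = 0 := by
          rw [hq (2 * Nat.find hz) (by omega), pair_even]
          exact Nat.find_spec hz
        rw [hHp, hHdef]
        exact if_pos ⟨Nat.find hz, h0⟩
      exact (Filter.tendsto_congr' heq).mpr tendsto_const_nhds
    · -- z has no zero; k z = x, v ∈ f x
      have hkz : k z = x := by rw [hkdef]; simp only [dif_neg hz]
      rw [hkz] at hv
      obtain ⟨l, hl, m, hm⟩ := hsep v hv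
      have hl0 : l = 0 := by omega
      subst hl0
      simp only [Nat.mul_one, Nat.add_zero] at hm
      have hz' : ∀ n, z n ≠ 0 := by push_neg at hz; exact hz
      have hHp : H (pair z v) = cseq 1 := by
        rw [hHdef]
        apply if_neg
        rintro ⟨i, hi⟩
        rw [pair_even] at hi
        exact hz' i hi
      have heq : ∀ᶠ q in nhdsWithin (pair z v)
          {p | ∃ x ∈ Dom LPO, ∃ y ∈ f (k x), p = pair x y}, H q = H (pair z v) := by
        filter_upwards [nhdsWithin_le_nhds (cyl_mem_nhds (pair z v) (2 * m)),
          self_mem_nhdsWithin] with q hq hqD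
        obtain ⟨z', -, v', hv', rfl⟩ := hqD
        have hzz : ∀ i < m, z' i = z i := by
          intro i hi
          have := hq (2 * i) (by omega)
          rwa [pair_even, pair_even] at this
        have hvv : ∀ i < m, v' i = v i := by
          intro i hi
          have := hq (2 * i + 1) (by omega)
          rwa [pair_odd, pair_odd] at this
        have hz'0 : ¬ ∃ n, z' n = 0 := by
          rintro ⟨n, hn⟩
          have hex : ∃ n, z' n = 0 := ⟨n, hn⟩
          have hsge : m ≤ Nat.find hex := by
            by_contra hcon
            push_neg at hcon
            have h0 : z' (Nat.find hex) = 0 := Nat.find_spec hex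
            rw [hzz (Nat.find hex) hcon] at h0
            exact hz' _ h0
          have hkz' : k z' = y (N (Nat.find hex)) := by
            rw [hkdef]; simp only [dif_pos hex]
          rw [hkz'] at hv'
          have hNge : m ≤ N (Nat.find hex) := le_trans hsge (hN1 _)
          apply hm (N (Nat.find hex)) hNge v' hv'
          unfold initSeg
          apply List.map_congr_left
          intro a ha
          exact (hvv a (List.mem_range.mp ha)).symm
        rw [hHp, hHdef]
        apply if_neg
        rintro ⟨i, hi⟩
        rw [pair_even] at hi
        exact hz'0 ⟨i, hi⟩
      exact (Filter.tendsto_congr' heq).mpr tendsto_const_nhds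
  · -- correctness
    intro z _
    constructor
    · rw [hkdef]
      by_cases hz : ∃ n, z n = 0
      · simp only [dif_pos hz]; exact hy _
      · simp only [dif_neg hz]; exact hx
    · intro v _
      by_cases hz : ∃ n, z n = 0
      · have : H (pair z v) = cseq 0 := by
          rw [hHdef]
          exact if_pos ⟨Nat.find hz, by rw [pair_even]; exact Nat.find_spec hz⟩
        rw [this]
        exact Or.inl ⟨hz, rfl⟩
      · push_neg at hz
        have : H (pair z v) = cseq 1 := by
          rw [hHdef]
          apply if_neg
          rintro ⟨i, hi⟩
          rw [pair_even] at hi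
          exact hz i hi
        rw [this]
        exact Or.inr ⟨hz, rfl⟩
end

section
/- LLPO × LLPO is not continuously Weihrauch reducible to LPO, i.e., LLPO × LLPO ≤*_W LPO fails. -/
/-!
Let `δ_N` be the sequence with a single `1` at position `N`. Then `δ_N → 0`, while the unique
`LLPO`-solution of `δ_N` alternates with the parity of `N`, so no function continuous at `0`
solves `LLPO` along the `δ_N`. Given a continuous reduction to `LPO`: if the `LPO`-instance of
`⟨a, 0⟩` had a zero, so would those of `⟨a, δ_N⟩` for large `N`, and the backward functional
at the fixed answer `0` would solve the second `LLPO` continuously along them. So every `⟨a, 0⟩`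
gets the answer `1`, and the backward functional at the answer `1` would solve the first `LLPO`
continuously along `⟨δ_N, 0⟩`.
-/

open Filter Topology

section Baire

variable {α : Type*} {l : Filter α}

theorem Baire.eventually_apply_eq {x : α → Baire} {x₀ : Baire} (hx : Tendsto x l (𝓝 x₀))
    (i : ℕ) : ∀ᶠ n in l, x n i = x₀ i := by
  have := tendsto_pi_nhds.1 hx i
  rwa [nhds_discrete, tendsto_pure] at this

theorem tendsto_pi_single_cseq_zero :
    Tendsto (fun N => (Pi.single N 1 : Baire)) atTop (𝓝 (cseq 0)) :=
  tendsto_pi_nhds.2 fun i => tendsto_const_nhds.congr'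
    ((eventually_gt_atTop i).mono fun _ hN => by simp [cseq, Pi.single_eq_of_ne hN.ne])

theorem tendsto_pair {x y : α → Baire} {x₀ y₀ : Baire} (hx : Tendsto x l (𝓝 x₀))
    (hy : Tendsto y l (𝓝 y₀)) : Tendsto (fun n => pair (x n) (y n)) l (𝓝 (pair x₀ y₀)) :=
  tendsto_pi_nhds.2 fun i => by
    simp only [pair]
    split_ifs
    exacts [tendsto_pi_nhds.1 hx _, tendsto_pi_nhds.1 hy _]

def unpairFst (z : Baire) : Baire := fun n => z (2 * n)

def unpairSnd (z : Baire) : Baire := fun n => z (2 * n + 1)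

@[simp]
theorem unpairFst_pair (x y : Baire) : unpairFst (pair x y) = x := by
  funext n
  simp [unpairFst, pair]

@[simp]
theorem unpairSnd_pair (x y : Baire) : unpairSnd (pair x y) = y := by
  funext n
  simp [unpairSnd, pair, Nat.add_mod, Nat.add_div]

theorem continuous_unpairFst : Continuous unpairFst :=
  continuous_pi fun _ => continuous_apply _

theorem continuous_unpairSnd : Continuous unpairSnd :=
  continuous_pi fun _ => continuous_apply _

end Baire

section Problems

theorem pair_mem_dom_prodP {f g : Problem} {a b : Baire} (ha : a ∈ Dom f) (hb : b ∈ Dom g) :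
    pair a b ∈ Dom (prodP f g) :=
  let ⟨u, hu⟩ := ha
  let ⟨v, hv⟩ := hb
  ⟨pair u v, a, b, u, v, rfl, rfl, hu, hv⟩

theorem unpair_mem_of_mem_prodP {f g : Problem} {a b w : Baire}
    (hw : w ∈ prodP f g (pair a b)) : unpairFst w ∈ f a ∧ unpairSnd w ∈ g b := by
  obtain ⟨x, y, u, v, hxy, rfl, hu, hv⟩ := hw
  have hx : a = x := by simpa using congrArg unpairFst hxy
  have hy : b = y := by simpa using congrArg unpairSnd hxy
  subst hx hy
  simpa using ⟨hu, hv⟩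

theorem cseq_zero_mem_LLPO : cseq 0 ∈ LLPO (cseq 0) :=
  ⟨fun _ _ hi => absurd rfl hi, .inl ⟨rfl, fun _ _ => rfl⟩⟩

theorem LLPO_pi_single (N : ℕ) : LLPO (Pi.single N 1) = {cseq ((N + 1) % 2)} := by
  ext u
  simp only [LLPO, Pi.single_apply, ne_eq, ite_eq_right_iff, one_ne_zero, imp_false,
    Decidable.not_not, forall_eq_apply_imp_iff, imp_self, implies_true, imp_not_comm, forall_eq,
    ← Nat.not_even_iff_odd, true_and, Set.mem_ofPred_eq, Set.mem_singleton_iff]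
  rcases Nat.even_or_odd N with hN | hN
  · have : (N + 1) % 2 = 1 := by have := Nat.even_iff.1 hN; omega
    simp [hN, this]
  · have : (N + 1) % 2 = 0 := by have := Nat.odd_iff.1 hN; omega
    simp [Nat.not_even_iff_odd.2 hN, this]

theorem pi_single_mem_dom_LLPO (N : ℕ) : (Pi.single N 1 : Baire) ∈ Dom LLPO :=
  ⟨_, by rw [LLPO_pi_single]; rfl⟩

theorem LLPO.not_tendsto_of_mem_pi_single {u : ℕ → Baire} {c : Baire}
    (hu : ∀ᶠ N in atTop, u N ∈ LLPO (Pi.single N 1)) : ¬ Tendsto u atTop (𝓝 c) := by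
  intro ht
  obtain ⟨M, hM⟩ := eventually_atTop.1 (hu.and (Baire.eventually_apply_eq ht 0))
  have hparity : ∀ N ≥ M, (N + 1) % 2 = c 0 := fun N hN => by
    obtain ⟨hsol, hc⟩ := hM N hN
    rw [LLPO_pi_single, Set.mem_singleton_iff] at hsol
    rwa [hsol] at hc
  have := hparity M le_rfl
  have := hparity (M + 1) (by omega)
  omega

theorem cseq_zero_mem_LPO {z : Baire} {p : ℕ} (h : z p = 0) : cseq 0 ∈ LPO z :=
  .inl ⟨⟨p, h⟩, rfl⟩

theorem cseq_one_mem_LPO {z : Baire} (h : ∀ n, z n ≠ 0) : cseq 1 ∈ LPO z :=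
  .inr ⟨h, rfl⟩

end Problems

structure ContWReduction (f g : Problem) where
  h : Baire → Baire
  k : Baire → Baire
  continuousOn_k : ContinuousOn k (Dom f)
  continuousOn_h : ContinuousOn h {p | ∃ x ∈ Dom f, ∃ y ∈ g (k x), p = pair x y}
  h_mem : ∀ x ∈ Dom f, ∀ y ∈ g (k x), h (pair x y) ∈ f x

namespace ContWReduction

variable {f g : Problem} {α : Type*} {l : Filter α}

theorem tendsto_k (R : ContWReduction f g) {x : α → Baire} {x₀ : Baire}
    (hx : ∀ n, x n ∈ Dom f) (hx₀ : x₀ ∈ Dom f) (hxt : Tendsto x l (𝓝 x₀)) :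
    Tendsto (fun n => R.k (x n)) l (𝓝 (R.k x₀)) :=
  (R.continuousOn_k x₀ hx₀).tendsto.comp (tendsto_nhdsWithin_iff.2 ⟨hxt, .of_forall hx⟩)

theorem tendsto_h (R : ContWReduction f g) {x : α → Baire} {x₀ y₀ : Baire}
    (hx : ∀ n, x n ∈ Dom f) (hx₀ : x₀ ∈ Dom f) (hy : ∀ᶠ n in l, y₀ ∈ g (R.k (x n)))
    (hy₀ : y₀ ∈ g (R.k x₀)) (hxt : Tendsto x l (𝓝 x₀)) :
    Tendsto (fun n => R.h (pair (x n) y₀)) l (𝓝 (R.h (pair x₀ y₀))) :=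
  (R.continuousOn_h _ ⟨x₀, hx₀, y₀, hy₀, rfl⟩).tendsto.comp <| tendsto_nhdsWithin_iff.2
    ⟨tendsto_pair hxt tendsto_const_nhds, hy.mono fun n hn => ⟨x n, hx n, y₀, hn, rfl⟩⟩

theorem k_pair_cseq_zero_ne_zero (R : ContWReduction (prodP LLPO LLPO) LPO) {a : Baire}
    (ha : a ∈ Dom LLPO) (p : ℕ) : R.k (pair a (cseq 0)) p ≠ 0 := by
  intro hp
  have hx (N : ℕ) : pair a (Pi.single N 1) ∈ Dom (prodP LLPO LLPO) :=
    pair_mem_dom_prodP ha (pi_single_mem_dom_LLPO N)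
  have hx₀ : pair a (cseq 0) ∈ Dom (prodP LLPO LLPO) :=
    pair_mem_dom_prodP ha ⟨_, cseq_zero_mem_LLPO⟩
  have hxt := tendsto_pair (tendsto_const_nhds (x := a)) tendsto_pi_single_cseq_zero
  have hzero : ∀ᶠ N in atTop, cseq 0 ∈ LPO (R.k (pair a (Pi.single N 1))) :=
    (Baire.eventually_apply_eq (R.tendsto_k hx hx₀ hxt) p).mono fun _ hN =>
      cseq_zero_mem_LPO (hN.trans hp)
  refine LLPO.not_tendsto_of_mem_pi_single ?_ ((continuous_unpairSnd.tendsto _).comp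
    (R.tendsto_h hx hx₀ hzero (cseq_zero_mem_LPO hp) hxt))
  exact hzero.mono fun N hN => (unpair_mem_of_mem_prodP (R.h_mem _ (hx N) _ hN)).2

end ContWReduction

/-- `LLPO × LLPO` is not continuously Weihrauch reducible to `LPO`. -/
theorem llpo_times_llpo_not_red_lpo : ¬ ContWRed (prodP LLPO LLPO) LPO := by
  rintro ⟨h, k, hk, hh, hred⟩
  let R : ContWReduction (prodP LLPO LLPO) LPO := ⟨h, k, hk, hh, fun x hx => (hred x hx).2⟩
  have hone {a : Baire} (ha : a ∈ Dom LLPO) : cseq 1 ∈ LPO (R.k (pair a (cseq 0))) :=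
    cseq_one_mem_LPO (R.k_pair_cseq_zero_ne_zero ha)
  have hzero : cseq 0 ∈ Dom LLPO := ⟨_, cseq_zero_mem_LLPO⟩
  have hx (N : ℕ) : pair (Pi.single N 1) (cseq 0) ∈ Dom (prodP LLPO LLPO) :=
    pair_mem_dom_prodP (pi_single_mem_dom_LLPO N) hzero
  have hsol := R.tendsto_h hx (pair_mem_dom_prodP hzero hzero)
    (.of_forall fun N => hone (pi_single_mem_dom_LLPO N)) (hone hzero)
    (tendsto_pair tendsto_pi_single_cseq_zero tendsto_const_nhds)
  refine LLPO.not_tendsto_of_mem_pi_single ?_ ((continuous_unpairFst.tendsto _).comp hsol)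
  exact .of_forall fun N =>
    (unpair_mem_of_mem_prodP (R.h_mem _ (hx N) _ (hone (pi_single_mem_dom_LLPO N)))).1
end

section
/- LPO * LPO is not continuously Weihrauch reducible to LPO, i.e., LPO * LPO ≤*_W LPO fails. -/
/-!
A continuous reduction `(h, k)` of a total problem to `LPO` splits Baire space into the open
set `U` where `k z` has a zero and its closed complement; on each piece the realizer
`z ↦ h ⟨z, LPO (k z)⟩` is `h` composed with a continuous map, hence continuous.
The parallel product `LPO × LPO = (id × LPO) ∘ (LPO × id)` lies below `LPO * LPO` and has
no such realizer. Let `1 = 1^ω` and let `eₛ` be `1` with a single `0` at position `s`.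
Along `⟨eₛ, 1⟩ → ⟨1, 1⟩` the first output bit jumps from `0` to `1`, and along
`⟨eₛ, eₜ⟩ → ⟨eₛ, 1⟩` (as `t → ∞`) the second one does. If `⟨1, 1⟩ ∈ U`, or if no `⟨eₛ, 1⟩`
lies in `U`, the first jump happens inside one piece; otherwise some `⟨eₛ, 1⟩` is an interior
point of `U` and the second jump does.
-/

open Filter Topology

def ev (z : Baire) : Baire := fun n => z (2 * n)

def od (z : Baire) : Baire := fun n => z (2 * n + 1)

@[simp]
lemma ev_pair (x y : Baire) : ev (pair x y) = x := by
  funext n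
  simp [ev, pair]

@[simp]
lemma od_pair (x y : Baire) : od (pair x y) = y := by
  funext n
  simp only [od, pair]
  rw [if_neg (by omega)]
  congr 1
  omega

@[simp]
lemma pair_two_mul (x y : Baire) (n : ℕ) : pair x y (2 * n) = x n :=
  congrFun (ev_pair x y) n

@[simp]
lemma pair_two_mul_add_one (x y : Baire) (n : ℕ) : pair x y (2 * n + 1) = y n :=
  congrFun (od_pair x y) n

lemma pair_ev_od (z : Baire) : pair (ev z) (od z) = z := by
  funext n
  simp only [pair, ev, od]
  split_ifs <;> congr 1 <;> omega

lemma continuous_ev : Continuous ev := continuous_pi fun _ => continuous_apply _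

lemma continuous_od : Continuous od := continuous_pi fun _ => continuous_apply _

lemma Filter.Tendsto.pair {α : Type*} {l : Filter α} {u v : α → Baire} {x y : Baire}
    (hu : Tendsto u l (𝓝 x)) (hv : Tendsto v l (𝓝 y)) :
    Tendsto (fun a => pair (u a) (v a)) l (𝓝 (pair x y)) := by
  refine tendsto_pi_nhds.2 fun n => ?_
  by_cases hn : n % 2 = 0
  · simpa only [_root_.pair, hn, if_true] using tendsto_pi_nhds.1 hu (n / 2)
  · simpa only [_root_.pair, hn, if_false] using tendsto_pi_nhds.1 hv (n / 2)

lemma ContinuousOn.pair {α : Type*} [TopologicalSpace α] {F G : α → Baire} {s : Set α}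
    (hF : ContinuousOn F s) (hG : ContinuousOn G s) :
    ContinuousOn (fun a => pair (F a) (G a)) s :=
  fun a ha => (hF a ha).pair (hG a ha)

lemma mem_prodP {f g : Problem} {z u : Baire} :
    u ∈ prodP f g z ↔ ev u ∈ f (ev z) ∧ od u ∈ g (od z) := by
  constructor
  · rintro ⟨x, y, u', v', rfl, rfl, hu, hv⟩
    simpa using And.intro hu hv
  · rintro ⟨hu, hv⟩
    exact ⟨ev z, od z, ev u, od u, (pair_ev_od z).symm, (pair_ev_od u).symm, hu, hv⟩

lemma pcomp_prodP_idp_prodP (f g : Problem) :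
    pcomp (prodP idp g) (prodP f idp) = prodP f g := by
  funext z
  ext u
  simp only [pcomp, Dom, mem_prodP, idp, Set.mem_singleton_iff]
  constructor
  · rintro ⟨-, y, ⟨hy, hyz⟩, huy, hu⟩
    rw [huy, ← hyz]
    exact ⟨hy, hu⟩
  · rintro ⟨hu, hv⟩
    refine ⟨fun y hy => ⟨pair (ev y) (od u), ?_⟩, pair (ev u) (od z), ?_, ?_⟩
    · have hyz : od y = od z := (mem_prodP.1 hy).2
      exact mem_prodP.2 ⟨by simp [idp], by rwa [od_pair, hyz]⟩
    · simpa using hu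
    · simpa using hv

open Classical in
noncomputable def lpoFun (x : Baire) : Baire := if ∃ n, x n = 0 then cseq 0 else cseq 1

lemma lpoFun_of_exists {x : Baire} (h : ∃ n, x n = 0) : lpoFun x = cseq 0 := if_pos h

lemma lpoFun_of_forall {x : Baire} (h : ∀ n, x n ≠ 0) : lpoFun x = cseq 1 :=
  if_neg fun ⟨n, hn⟩ => h n hn

lemma lpoFun_eq_cseq_zero_iff {x : Baire} : lpoFun x = cseq 0 ↔ ∃ n, x n = 0 := by
  refine ⟨fun h => ?_, lpoFun_of_exists⟩
  by_contra hx
  push Not at hx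
  simpa [lpoFun_of_forall hx, cseq] using congrFun h 0

lemma lpoFun_ne_cseq_zero_iff {x : Baire} : lpoFun x ≠ cseq 0 ↔ lpoFun x = cseq 1 := by
  by_cases h : ∃ n, x n = 0
  · simp [lpoFun_of_exists h, cseq, funext_iff]
  · push Not at h
    simp [lpoFun_of_forall h, cseq, funext_iff]

lemma mem_LPO {x y : Baire} : y ∈ LPO x ↔ y = lpoFun x := by
  by_cases h : ∃ n, x n = 0
  · simp [LPO, h, lpoFun_of_exists h]
  · push Not at h
    simp [LPO, h, lpoFun_of_forall h]

lemma initSeg_eq_of_mem_cylinder {x z : Baire} {m : ℕ} (h : z ∈ PiNat.cylinder x m) :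
    initSeg z m = initSeg x m :=
  List.map_congr_left fun i hi => PiNat.mem_cylinder_iff.1 h i (List.mem_range.1 hi)

lemma ComputableOn.continuousOn {F : Baire → Baire} {D : Set Baire} (hF : ComputableOn F D) :
    ContinuousOn F D := by
  obtain ⟨φ, -, hφ⟩ := hF
  refine fun x hx => continuousWithinAt_pi.2 fun n => ?_
  obtain ⟨m, hm⟩ := (hφ x hx n).1
  have hcyl : PiNat.cylinder x m ∈ 𝓝[D] x :=
    mem_nhdsWithin_of_mem_nhds <|
      (PiNat.isOpen_cylinder _ x m).mem_nhds (PiNat.self_mem_cylinder x m)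
  refine tendsto_nhds_of_eventually_eq ?_
  filter_upwards [hcyl, self_mem_nhdsWithin] with z hzx hz
  exact ((hφ z hz n).2 m _ (by rwa [initSeg_eq_of_mem_cylinder hzx])).symm

lemma computableOn_reindex {e : ℕ → ℕ} (he : Computable e) (D : Set Baire) :
    ComputableOn (fun z n => z (e n)) D := by
  refine ⟨fun l n => l[e n]?,
    Primrec.list_getElem?.to_comp.comp Computable.fst (he.comp Computable.snd),
    fun x _ n => ⟨⟨e n + 1, ?_⟩, fun m v hv => ?_⟩⟩
  · simp [initSeg]
  · obtain ⟨i, hi, rfl⟩ := by simpa [initSeg] using hv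
    obtain ⟨-, rfl⟩ := List.getElem?_eq_some_iff.1 hi
    simp

lemma WRed.contWRed {f g : Problem} (h : WRed f g) : ContWRed f g := by
  obtain ⟨h, k, hk, hh, hcorr⟩ := h
  exact ⟨h, k, hk.continuousOn, hh.continuousOn, hcorr⟩

lemma ContWRed.trans {f g i : Problem} (hfg : ContWRed f g) (hgi : ContWRed g i) :
    ContWRed f i := by
  obtain ⟨h₁, k₁, hk₁, hh₁, hcorr₁⟩ := hfg
  obtain ⟨h₂, k₂, hk₂, hh₂, hcorr₂⟩ := hgi
  refine ⟨fun p => h₁ (pair (ev p) (h₂ (pair (k₁ (ev p)) (od p)))), k₂ ∘ k₁,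
    hk₂.comp hk₁ fun x hx => (hcorr₁ x hx).1, ?_, fun x hx => ⟨(hcorr₂ _ (hcorr₁ x hx).1).1,
      fun y hy => by simpa using (hcorr₁ x hx).2 _ ((hcorr₂ _ (hcorr₁ x hx).1).2 y hy)⟩⟩
  set S := {p | ∃ x ∈ Dom f, ∃ y ∈ i ((k₂ ∘ k₁) x), p = pair x y}
  have hS₁ : Set.MapsTo (fun p => pair (k₁ (ev p)) (od p)) S
      {p | ∃ x ∈ Dom g, ∃ y ∈ i (k₂ x), p = pair x y} := by
    rintro _ ⟨x, hx, y, hy, rfl⟩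
    exact ⟨k₁ x, (hcorr₁ x hx).1, y, hy, by simp⟩
  have hS₂ : Set.MapsTo (fun p => pair (ev p) (h₂ (pair (k₁ (ev p)) (od p)))) S
      {p | ∃ x ∈ Dom f, ∃ y ∈ g (k₁ x), p = pair x y} := by
    rintro _ ⟨x, hx, y, hy, rfl⟩
    exact ⟨x, hx, _, (hcorr₂ _ (hcorr₁ x hx).1).2 y hy, by simp⟩
  have hk₁S : ContinuousOn (fun p => k₁ (ev p)) S :=
    hk₁.comp continuous_ev.continuousOn fun _ ⟨x, hx, _, _, hp⟩ => by simpa [hp] using hx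
  have hh₂S : ContinuousOn (fun p => h₂ (pair (k₁ (ev p)) (od p))) S :=
    hh₂.comp (hk₁S.pair continuous_od.continuousOn) hS₁
  exact hh₁.comp (continuous_ev.continuousOn.pair hh₂S) hS₂

lemma primrecPred_mod_two_eq_zero : PrimrecPred fun n : ℕ => n % 2 = 0 :=
  Primrec.eq.comp (Primrec.nat_mod.comp Primrec.id (Primrec.const 2)) (Primrec.const 0)

-- The backward map `⟨x, y⟩ ↦ ⟨ev x, y⟩` is the reindexing below.
lemma wRed_prodP_idp_LPO : WRed (prodP idp LPO) LPO := by
  refine ⟨fun p n => p (if n % 2 = 0 then 2 * n else n), od,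
    computableOn_reindex Primrec.nat_double_succ.to_comp _,
    computableOn_reindex (Primrec.ite primrecPred_mod_two_eq_zero Primrec.nat_double
      Primrec.id).to_comp _, fun x _ => ⟨⟨lpoFun (od x), mem_LPO.2 rfl⟩, fun y hy => ?_⟩⟩
  refine mem_prodP.2 ⟨funext fun n => by simp [ev], ?_⟩
  convert hy using 1
  funext n
  simp [od]

-- The backward map `⟨x, y⟩ ↦ ⟨y, od x⟩` is the reindexing below.
lemma wRed_prodP_LPO_idp : WRed (prodP LPO idp) LPO := by
  refine ⟨fun p n => p (if n % 2 = 0 then n + 1 else 2 * n), ev,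
    computableOn_reindex Primrec.nat_double.to_comp _,
    computableOn_reindex (Primrec.ite primrecPred_mod_two_eq_zero Primrec.succ
      Primrec.nat_double).to_comp _, fun x _ => ⟨⟨lpoFun (ev x), mem_LPO.2 rfl⟩, fun y hy => ?_⟩⟩
  refine mem_prodP.2 ⟨?_, funext fun n => by simp [od]⟩
  convert hy using 1
  funext n
  simp [ev]

lemma ContinuousWithinAt.apply_eq_of_tendsto {R : Baire → Baire} {S : Set Baire} {x : Baire}
    (hR : ContinuousWithinAt R S x) {u : ℕ → Baire} (hu : Tendsto u atTop (𝓝 x))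
    (huS : ∀ s, u s ∈ S) {i c : ℕ} (hc : ∀ s, R (u s) i = c) : R x i = c := by
  have hlim : Tendsto (fun s => R (u s) i) atTop (𝓝 (R x i)) :=
    ((continuous_apply i).tendsto _).comp
      (hR.tendsto.comp (tendsto_nhdsWithin_iff.2 ⟨hu, Eventually.of_forall huS⟩))
  simp only [hc] at hlim
  exact (tendsto_nhds_unique tendsto_const_nhds hlim).symm

lemma tendsto_update_cseq_one :
    Tendsto (fun s => Function.update (cseq 1) s 0) atTop (𝓝 (cseq 1)) := by
  refine tendsto_pi_nhds.2 fun m => tendsto_nhds_of_eventually_eq ?_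
  filter_upwards [eventually_gt_atTop m] with s hs
  exact Function.update_of_ne hs.ne _ _

lemma lpoFun_update_cseq_one (s : ℕ) : lpoFun (Function.update (cseq 1) s 0) = cseq 0 :=
  lpoFun_of_exists ⟨s, by simp⟩

lemma lpoFun_cseq_one : lpoFun (cseq 1) = cseq 1 :=
  lpoFun_of_forall fun _ => one_ne_zero

theorem not_continuousOn_and_continuousOn_compl {R : Baire → Baire}
    (hR : ∀ z, R z ∈ prodP LPO LPO z) {U : Set Baire} (hU : IsOpen U) :
    ¬ (ContinuousOn R U ∧ ContinuousOn R Uᶜ) := by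
  rintro ⟨hRU, hRC⟩
  have hR₀ (x y : Baire) : R (pair x y) 0 = lpoFun x 0 := by
    simpa [ev, mem_LPO] using congrFun (mem_LPO.1 (mem_prodP.1 (hR (pair x y))).1) 0
  have hR₁ (x y : Baire) : R (pair x y) 1 = lpoFun y 0 := by
    simpa [od, mem_LPO] using congrFun (mem_LPO.1 (mem_prodP.1 (hR (pair x y))).2) 0
  set e : ℕ → Baire := fun s => Function.update (cseq 1) s 0
  set a := pair (cseq 1) (cseq 1)
  have hjump {S : Set Baire} (hS : ContinuousWithinAt R S a)
      (heS : ∀ s, pair (e s) (cseq 1) ∈ S) : False := by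
    have ha₀ : R a 0 = 0 :=
      hS.apply_eq_of_tendsto (tendsto_update_cseq_one.pair tendsto_const_nhds) heS
        fun s => by simp [hR₀, lpoFun_update_cseq_one, cseq]
    simp [a, hR₀, lpoFun_cseq_one, cseq] at ha₀
  by_cases ha : a ∈ U
  · exact hjump ((hRU.continuousAt (hU.mem_nhds ha)).continuousWithinAt (s := Set.univ))
      fun _ => trivial
  by_cases he : ∃ s, pair (e s) (cseq 1) ∈ U
  · obtain ⟨s, hs⟩ := he
    have hRs : ContinuousWithinAt R Set.univ (pair (e s) (cseq 1)) :=
      (hRU.continuousAt (hU.mem_nhds hs)).continuousWithinAt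
    have hs₁ : R (pair (e s) (cseq 1)) 1 = 0 :=
      hRs.apply_eq_of_tendsto (tendsto_const_nhds.pair tendsto_update_cseq_one)
        (fun _ => trivial) fun t => by simp [hR₁, e, lpoFun_update_cseq_one, cseq]
    simp [hR₁, lpoFun_cseq_one, cseq] at hs₁
  · push Not at he
    exact hjump (hRC a ha) he

lemma dom_prodP_LPO_LPO : Dom (prodP LPO LPO) = Set.univ :=
  Set.eq_univ_of_forall fun z =>
    ⟨pair (lpoFun (ev z)) (lpoFun (od z)), mem_prodP.2 (by simp [mem_LPO])⟩

theorem not_contWRed_prodP_LPO_LPO : ¬ ContWRed (prodP LPO LPO) LPO := by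
  rintro ⟨h, k, hk, hh, hcorr⟩
  rw [dom_prodP_LPO_LPO] at hk hh hcorr
  set R : Baire → Baire := fun z => h (pair z (lpoFun (k z)))
  have hpiece (c : Baire) : ContinuousOn R {z | lpoFun (k z) = c} :=
    (hh.comp (continuousOn_id.pair continuousOn_const) fun z hz =>
      ⟨z, trivial, c, mem_LPO.2 hz.symm, rfl⟩).congr fun z hz => by simp [R, hz.out]
  have hU : IsOpen {z | lpoFun (k z) = cseq 0} := by
    simp only [lpoFun_eq_cseq_zero_iff, Set.ofPred_exists]
    exact isOpen_iUnion fun n =>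
      (isOpen_discrete {0}).preimage ((continuous_apply n).comp (continuousOn_univ.1 hk))
  refine not_continuousOn_and_continuousOn_compl
    (fun z => (hcorr z trivial).2 _ (mem_LPO.2 rfl)) hU ⟨hpiece _, ?_⟩
  simpa only [Set.compl_ofPred, lpoFun_ne_cseq_zero_iff] using hpiece (cseq 1)

/-- `LPO * LPO` is not continuously Weihrauch reducible to `LPO`. -/
theorem lpo_star_lpo_not_red_lpo (p : Problem) (hp : IsCompProd LPO LPO p) :
    ¬ ContWRed p LPO := by
  intro hred
  have hprod : WRed (pcomp (prodP idp LPO) (prodP LPO idp)) p :=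
    hp.2 _ _ wRed_prodP_idp_LPO wRed_prodP_LPO_idp
  rw [pcomp_prodP_idp_prodP] at hprod
  exact not_contWRed_prodP_LPO_LPO (hprod.contWRed.trans hred)
end
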